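/- arXiv:1103.5531 — 2 statements merged into one kernel-verified Lean document; each statement's English description precedes it below -/
import Mathlib

section
/- For any finite simple graphs G1 = (V1, E1) and G2 = (V2, E2) on disjoint vertex sets, the acyclic chromatic number of their join satisfies χ_a(G1 ⋈ G2) = min{χ_a(G1) + |V2|, χ_a(G2) + |V1|}. -/
open SimpleGraph

/-- A proper vertex coloring: adjacent vertices receive distinct colors. -/
def IsProperColoring {V α : Type*} (G : SimpleGraph V) (φ : V → α) : Prop :=
  ∀ ⦃u v : V⦄, G.Adj u v → φ u ≠ φ v

/-- An acyclic coloring: a proper coloring such that the subgraph induced by the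
union of any two color classes contains no cycle. -/
def IsAcyclicColoring {V α : Type*} (G : SimpleGraph V) (φ : V → α) : Prop :=
  IsProperColoring G φ ∧
    ∀ c₁ c₂ : α, (G.induce {v | φ v = c₁ ∨ φ v = c₂}).IsAcyclic

/-- A graph contains a path on four (distinct) vertices `a-b-c-d`,
not necessarily induced. -/
def HasP4 {V : Type*} (G : SimpleGraph V) : Prop :=
  ∃ a b c d : V, a ≠ b ∧ a ≠ c ∧ a ≠ d ∧ b ≠ c ∧ b ≠ d ∧ c ≠ d ∧
    G.Adj a b ∧ G.Adj b c ∧ G.Adj c d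

/-- A star coloring: a proper coloring such that the subgraph induced by the
union of any two color classes contains no path on four vertices. -/
def IsStarColoring {V α : Type*} (G : SimpleGraph V) (φ : V → α) : Prop :=
  IsProperColoring G φ ∧
    ∀ c₁ c₂ : α, ¬ HasP4 (G.induce {v | φ v = c₁ ∨ φ v = c₂})

/-- A cograph: a graph with no induced path on four vertices. -/
def IsCograph {V : Type*} (G : SimpleGraph V) : Prop :=
  ¬ ∃ a b c d : V, a ≠ b ∧ a ≠ c ∧ a ≠ d ∧ b ≠ c ∧ b ≠ d ∧ c ≠ d ∧
    G.Adj a b ∧ G.Adj b c ∧ G.Adj c d ∧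
    ¬ G.Adj a c ∧ ¬ G.Adj a d ∧ ¬ G.Adj b d

/-- The acyclic chromatic number: the least number of colors in an acyclic coloring. -/
noncomputable def acyclicChromaticNumber {V : Type*} (G : SimpleGraph V) : ℕ :=
  sInf {n : ℕ | ∃ φ : V → Fin n, IsAcyclicColoring G φ}

/-- The star chromatic number: the least number of colors in a star coloring. -/
noncomputable def starChromaticNumber {V : Type*} (G : SimpleGraph V) : ℕ :=
  sInf {n : ℕ | ∃ φ : V → Fin n, IsStarColoring G φ}

/-- A cycle is induced if the only edges of the graph among its vertices
are the edges of the cycle. -/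
def SimpleGraph.Walk.IsInducedCycle {V : Type*} {G : SimpleGraph V} {v : V}
    (p : G.Walk v v) : Prop :=
  p.IsCycle ∧ ∀ u w : V, u ∈ p.support → w ∈ p.support → G.Adj u w → s(u, w) ∈ p.edges

/-- A graph is chordal if it has no induced cycle on four or more vertices. -/
def IsChordal {V : Type*} (G : SimpleGraph V) : Prop :=
  ∀ (v : V) (p : G.Walk v v), p.IsInducedCycle → p.length ≤ 3

/-- The treewidth of `G`: the minimum of `ω(G⁺) - 1` over all triangulations
(chordal supergraphs on the same vertex set) `G⁺` of `G`. -/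
noncomputable def treewidth {V : Type*} (G : SimpleGraph V) : ℕ :=
  sInf {k : ℕ | ∃ H : SimpleGraph V, G ≤ H ∧ IsChordal H ∧ k = H.cliqueNum - 1}

/-- An interval graph: vertices can be mapped to real closed intervals so that
two distinct vertices are adjacent iff their intervals intersect. -/
def IsIntervalGraph {V : Type*} (G : SimpleGraph V) : Prop :=
  ∃ f : V → ℝ × ℝ, ∀ u v : V, u ≠ v →
    (G.Adj u v ↔ (Set.Icc (f u).1 (f u).2 ∩ Set.Icc (f v).1 (f v).2).Nonempty)

/-- The pathwidth of `G`: the minimum of `ω(G⁺) - 1` over all intervalizations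
(interval supergraphs on the same vertex set) `G⁺` of `G`. -/
noncomputable def pathwidth {V : Type*} (G : SimpleGraph V) : ℕ :=
  sInf {k : ℕ | ∃ H : SimpleGraph V, G ≤ H ∧ IsIntervalGraph H ∧ k = H.cliqueNum - 1}

/-- The join of two graphs on disjoint vertex sets: their disjoint union together
with all edges between the two sides. -/
def SimpleGraph.join {V₁ V₂ : Type*} (G₁ : SimpleGraph V₁) (G₂ : SimpleGraph V₂) :
    SimpleGraph (V₁ ⊕ V₂) where
  Adj x y :=
    match x, y with
    | Sum.inl a, Sum.inl b => G₁.Adj a b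
    | Sum.inr a, Sum.inr b => G₂.Adj a b
    | Sum.inl _, Sum.inr _ => True
    | Sum.inr _, Sum.inl _ => True
  symm := ⟨by rintro (a | a) (b | b) h <;> simp_all <;> exact h.symm⟩
  loopless := ⟨by rintro (a | a) h <;> simp_all⟩

/-! Colour one side acyclically and give every vertex of the other side a colour of its own: a
two-coloured subgraph then either lies inside the first side or is a star, so it is acyclic. This
gives both upper bounds. Conversely, if both sides of an acyclic colouring of the join repeated a
colour, the two repeated pairs would span a two-coloured 4-cycle; so one side, say `V₂`, is coloured
injectively. As `V₁` is complete to `V₂`, the colours used on `V₁` avoid these `|V₂|` colours, and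
restricting gives an acyclic colouring of `G₁` with the remaining ones. -/

open Function

namespace SimpleGraph

def Embedding.joinInl {V₁ V₂ : Type*} (G₁ : SimpleGraph V₁) (G₂ : SimpleGraph V₂) :
    G₁ ↪g G₁.join G₂ where
  toEmbedding := .inl
  map_rel_iff' := .rfl

def Iso.joinComm {V₁ V₂ : Type*} (G₁ : SimpleGraph V₁) (G₂ : SimpleGraph V₂) :
    G₁.join G₂ ≃g G₂.join G₁ where
  toEquiv := .sumComm V₁ V₂
  map_rel_iff' := by rintro (a | a) (b | b) <;> exact .rfl

noncomputable def Embedding.induceIsoImage {V W : Type*} {G : SimpleGraph V}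
    {H : SimpleGraph W} (f : G ↪g H) (s : Set V) : G.induce s ≃g H.induce (f '' s) where
  toEquiv := Equiv.Set.image f s f.injective
  map_rel_iff' := f.map_adj_iff

lemma not_isAcyclic_of_four_cycle {V : Type*} {G : SimpleGraph V} {a b c d : V}
    (hab : G.Adj a b) (hbc : G.Adj b c) (hcd : G.Adj c d) (hda : G.Adj d a)
    (hac : a ≠ c) (hbd : b ≠ d) : ¬ G.IsAcyclic := fun hG =>
  hG (.cons hab (.cons hbc (.cons hcd (.cons hda .nil)))) <| by
    simp [Walk.cons_isCycle_iff, hab.ne, hbc.ne, hcd.ne, hda.ne, hac, hbd, hab.ne.symm,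
      hda.ne.symm, hac.symm]

end SimpleGraph

section Coloring

variable {V W α β : Type*} {G : SimpleGraph V} {H : SimpleGraph W}

lemma IsAcyclicColoring.comap {φ : W → α} (hφ : IsAcyclicColoring H φ) (f : G →g H)
    (hf : Injective f) : IsAcyclicColoring G (φ ∘ f) :=
  ⟨fun _ _ huv => hφ.1 (f.map_adj huv), fun c₁ c₂ =>
    (hφ.2 c₁ c₂).comap (induceHom f fun _ hv => hv)
      (induceHom_injective _ _ hf.injOn)⟩

lemma IsAcyclicColoring.of_comp {φ : V → α} {f : α → β} (hf : Injective f)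
    (h : IsAcyclicColoring G (f ∘ φ)) : IsAcyclicColoring G φ := by
  refine ⟨fun _ _ huv he => h.1 huv (congrArg f he), fun c₁ c₂ => ?_⟩
  have hS : {v | φ v = c₁ ∨ φ v = c₂} = {v | f (φ v) = f c₁ ∨ f (φ v) = f c₂} := by
    simp only [hf.eq_iff]
  exact hS ▸ h.2 (f c₁) (f c₂)

lemma isAcyclicColoring_of_injective {φ : V → α} (hφ : Injective φ) : IsAcyclicColoring G φ := by
  refine ⟨fun _ _ huv he => huv.ne (hφ he), fun c₁ c₂ => .of_card_le_two ?_⟩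
  calc ENat.card {v | φ v = c₁ ∨ φ v = c₂}
      ≤ ENat.card ({c₁, c₂} : Set α) :=
        ENat.card_le_card_of_injective (f := fun v => ⟨φ v, v.2⟩)
          fun _ _ h => Subtype.ext (hφ (congrArg Subtype.val h))
    _ ≤ 2 := (Set.encard_insert_le _ _).trans (by simp [one_add_one_eq_two])

lemma IsProperColoring.isAcyclic_induce_of_singleton {φ : V → α} (hφ : IsProperColoring G φ)
    {r : V} (hr : ∀ v, φ v = φ r → v = r) (c : α) :
    (G.induce {v | φ v = c ∨ φ v = φ r}).IsAcyclic := by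
  refine (isAcyclic_starGraph ⟨r, Or.inr rfl⟩).anti fun x y hxy => ?_
  refine starGraph_adj.mpr ⟨hxy.ne, ?_⟩
  rcases x.2 with hx | hx
  · rcases y.2 with hy | hy
    · exact absurd (hx.trans hy.symm) (hφ hxy)
    · exact Or.inr (Subtype.ext (hr _ hy))
  · exact Or.inl (Subtype.ext (hr _ hx))

end Coloring

section Number

variable {V W α : Type*} {G : SimpleGraph V} {H : SimpleGraph W}

lemma acyclicChromaticNumber_le_natCard [Finite α] {φ : V → α} (hφ : IsAcyclicColoring G φ) :
    acyclicChromaticNumber G ≤ Nat.card α :=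
  Nat.sInf_le ⟨Finite.equivFin α ∘ φ, .of_comp (Finite.equivFin α).symm.injective <| by
    simpa only [← comp_assoc, Equiv.symm_comp_self, id_comp] using hφ⟩

lemma acyclicChromaticNumber_le_ncard_range [Finite α] {φ : V → α}
    (hφ : IsAcyclicColoring G φ) : acyclicChromaticNumber G ≤ (Set.range φ).ncard := by
  rw [← Nat.card_coe_set_eq]
  exact acyclicChromaticNumber_le_natCard
    (hφ.of_comp (φ := Set.rangeFactorization φ) Subtype.val_injective)

lemma exists_isAcyclicColoring_fin_acyclicChromaticNumber [Finite V] (G : SimpleGraph V) :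
    ∃ φ : V → Fin (acyclicChromaticNumber G), IsAcyclicColoring G φ :=
  Nat.sInf_mem (s := {n | ∃ φ : V → Fin n, IsAcyclicColoring G φ})
    ⟨Nat.card V, Finite.equivFin V, isAcyclicColoring_of_injective (Finite.equivFin V).injective⟩

lemma acyclicChromaticNumber_congr (e : G ≃g H) :
    acyclicChromaticNumber G = acyclicChromaticNumber H := by
  unfold acyclicChromaticNumber
  congr 1
  ext n
  exact ⟨fun ⟨φ, hφ⟩ => ⟨φ ∘ e.symm, hφ.comap e.symm.toHom e.symm.injective⟩,
    fun ⟨φ, hφ⟩ => ⟨φ ∘ e, hφ.comap e.toHom e.injective⟩⟩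

end Number

section Join

variable {V₁ V₂ α : Type*} {G₁ : SimpleGraph V₁} {G₂ : SimpleGraph V₂}

lemma IsAcyclicColoring.join_sumMap_id {φ₁ : V₁ → α} (h₁ : IsAcyclicColoring G₁ φ₁)
    (G₂ : SimpleGraph V₂) : IsAcyclicColoring (G₁.join G₂) (Sum.map φ₁ id) := by
  have hproper : IsProperColoring (G₁.join G₂) (Sum.map φ₁ id) := by
    rintro (u | u) (v | v) huv he
    · exact h₁.1 huv (Sum.inl_injective he)
    · exact Sum.inl_ne_inr he
    · exact Sum.inr_ne_inl he
    · exact G₂.ne_of_adj huv (Sum.inr_injective he)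
  have hsingleton (w : V₂) : ∀ x, Sum.map φ₁ id x = Sum.map φ₁ id (.inr w) → x = .inr w := by
    rintro (v | v) h <;> simp_all
  refine ⟨hproper, ?_⟩
  rintro (a | w) (b | w')
  · have hS : {x | Sum.map φ₁ (id : V₂ → V₂) x = .inl a ∨ Sum.map φ₁ id x = .inl b} =
        (Sum.inl : V₁ → V₁ ⊕ V₂) '' {v | φ₁ v = a ∨ φ₁ v = b} := by
      ext (v | v) <;> simp
    exact hS ▸ ((Embedding.joinInl G₁ G₂).induceIsoImage _).isAcyclic_iff.mp (h₁.2 a b)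
  · exact hproper.isAcyclic_induce_of_singleton (hsingleton w') _
  · have hS : {x | Sum.map φ₁ id x = .inr w ∨ Sum.map φ₁ id x = .inl b} =
        {x | Sum.map φ₁ id x = .inl b ∨ Sum.map φ₁ id x = .inr w} :=
      Set.ext fun _ => or_comm
    exact hS ▸ hproper.isAcyclic_induce_of_singleton (hsingleton w) _
  · exact hproper.isAcyclic_induce_of_singleton (hsingleton w') _

lemma IsAcyclicColoring.join_injective_inl_or_inr {φ : V₁ ⊕ V₂ → α}
    (hφ : IsAcyclicColoring (G₁.join G₂) φ) :
    Injective (φ ∘ Sum.inl) ∨ Injective (φ ∘ Sum.inr) := by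
  by_contra! h
  obtain ⟨⟨u, u', hu, huu'⟩, ⟨v, v', hv, hvv'⟩⟩ :=
    And.imp not_injective_iff.mp not_injective_iff.mp h
  refine not_isAcyclic_of_four_cycle
    (G := (G₁.join G₂).induce {x | φ x = φ (.inl u) ∨ φ x = φ (.inr v)})
    (a := ⟨.inl u, .inl rfl⟩) (b := ⟨.inr v, .inr rfl⟩)
    (c := ⟨.inl u', .inl hu.symm⟩) (d := ⟨.inr v', .inr hv.symm⟩)
    trivial trivial trivial trivial ?_ ?_ (hφ.2 _ _)
  · simpa using huu'
  · simpa using hvv'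

lemma IsAcyclicColoring.acyclicChromaticNumber_add_natCard_le [Finite α] {φ : V₁ ⊕ V₂ → α}
    (hφ : IsAcyclicColoring (G₁.join G₂) φ) (hinj : Injective (φ ∘ Sum.inr)) :
    acyclicChromaticNumber G₁ + Nat.card V₂ ≤ Nat.card α := by
  have hdisj : Disjoint (Set.range (φ ∘ Sum.inl)) (Set.range (φ ∘ Sum.inr)) :=
    Set.disjoint_range_iff.mpr fun u v =>
      hφ.1 (show (G₁.join G₂).Adj (.inl u) (.inr v) from trivial)
  have hG₁ : acyclicChromaticNumber G₁ ≤ (Set.range (φ ∘ Sum.inl)).ncard :=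
    acyclicChromaticNumber_le_ncard_range
      (hφ.comap (Embedding.joinInl G₁ G₂).toHom Sum.inl_injective)
  calc acyclicChromaticNumber G₁ + Nat.card V₂
      ≤ (Set.range (φ ∘ Sum.inl)).ncard + (Set.range (φ ∘ Sum.inr)).ncard := by
        rw [Set.ncard_range_of_injective hinj]
        exact Nat.add_le_add_right hG₁ _
    _ = (Set.range (φ ∘ Sum.inl) ∪ Set.range (φ ∘ Sum.inr)).ncard :=
        (Set.ncard_union_eq hdisj).symm
    _ ≤ Nat.card α := Set.ncard_le_card _

lemma IsAcyclicColoring.min_le_natCard [Finite α] {φ : V₁ ⊕ V₂ → α}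
    (hφ : IsAcyclicColoring (G₁.join G₂) φ) :
    min (acyclicChromaticNumber G₁ + Nat.card V₂) (acyclicChromaticNumber G₂ + Nat.card V₁) ≤
      Nat.card α := by
  rcases hφ.join_injective_inl_or_inr with h | h
  · have hφ' := hφ.comap (Iso.joinComm G₂ G₁).toHom (Iso.joinComm G₂ G₁).injective
    exact min_le_of_right_le (hφ'.acyclicChromaticNumber_add_natCard_le h)
  · exact min_le_of_left_le (hφ.acyclicChromaticNumber_add_natCard_le h)

lemma acyclicChromaticNumber_join_le [Finite V₁] [Finite V₂] (G₁ : SimpleGraph V₁)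
    (G₂ : SimpleGraph V₂) :
    acyclicChromaticNumber (G₁.join G₂) ≤ acyclicChromaticNumber G₁ + Nat.card V₂ := by
  obtain ⟨φ₁, h₁⟩ := exists_isAcyclicColoring_fin_acyclicChromaticNumber G₁
  simpa [Nat.card_sum] using acyclicChromaticNumber_le_natCard (h₁.join_sumMap_id G₂)

end Join

/-- The acyclic chromatic number of a join:
`χₐ(G₁ ⋈ G₂) = min (χₐ(G₁) + |V₂|) (χₐ(G₂) + |V₁|)`. -/
theorem acyclicChromaticNumber_join {V₁ V₂ : Type*} [Fintype V₁] [Fintype V₂]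
    (G₁ : SimpleGraph V₁) (G₂ : SimpleGraph V₂) :
    acyclicChromaticNumber (G₁.join G₂) =
      min (acyclicChromaticNumber G₁ + Fintype.card V₂)
        (acyclicChromaticNumber G₂ + Fintype.card V₁) := by
  simp only [← Nat.card_eq_fintype_card]
  refine le_antisymm (le_min (acyclicChromaticNumber_join_le G₁ G₂) ?_) ?_
  · rw [acyclicChromaticNumber_congr (Iso.joinComm G₁ G₂)]
    exact acyclicChromaticNumber_join_le G₂ G₁
  · obtain ⟨φ, hφ⟩ := exists_isAcyclicColoring_fin_acyclicChromaticNumber (G₁.join G₂)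
    simpa using hφ.min_le_natCard
end

section
/- Let G be a cograph and let φ be a proper vertex coloring of G. Then φ is an acyclic coloring of G if and only if there exists a triangulation G+ of G (a chordal graph on the same vertex set whose edge set contains that of G) such that φ is a proper coloring of G+. -/
open SimpleGraph

/-!
Backward direction: a cycle of `G` on two colour classes is a cycle of the triangulation `G⁺`,
so it contains an induced cycle of `G⁺`, which by chordality is a triangle; but a cycle that is
properly coloured with two colours has even length.

Forward direction, by induction on vertex sets: by Seinsche's theorem a cograph on at least two
vertices is a disjoint union or a join of two smaller parts. Triangulations of the two parts of a
disjoint union combine. In a join `A + B` an acyclic colouring is injective on one side, say `B`,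
since a repeated colour on each side would span a two-coloured `C₄`. Triangulate `G[A]` and join
every vertex of `B` to everything: `B` becomes a rainbow clique, so the colouring stays proper.
-/

namespace SimpleGraph.Walk

variable {V : Type*} {G : SimpleGraph V}

theorem mem_edges_of_length_eq_one {u v : V} {p : G.Walk u v} (h : p.length = 1) :
    s(u, v) ∈ p.edges := by
  cases p with
  | nil => simp at h
  | cons _ q =>
    cases q with
    | nil => simp
    | cons _ _ => simp at h

/-- The arc of `c` from `w` back to `u`, closed up by the chord, is the shorter cycle. -/
theorem IsCycle.exists_isCycle_length_lt_of_adj {u w : V} {c : G.Walk u u} (hc : c.IsCycle)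
    (hw : w ∈ c.support) (hadj : G.Adj u w) (hchord : s(u, w) ∉ c.edges) :
    ∃ q : G.Walk u u, q.IsCycle ∧ q.length < c.length ∧ q.support ⊆ c.support := by
  classical
  set t₁ := c.takeUntil w hw
  set t₂ := c.dropUntil w hw
  have hspec : t₁.append t₂ = c := c.take_spec hw
  have ht₁ : ¬ t₁.Nil := not_nil_of_ne hadj.ne
  have ht₂ : t₂.IsPath := (show (t₁.append t₂).IsCycle by rwa [hspec]).isPath_of_append_right ht₁
  have hlen : t₁.length + t₂.length = c.length := by rw [← hspec, length_append]
  have ht₁len : 2 ≤ t₁.length := by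
    have h0 : t₁.length ≠ 0 := fun h => ht₁ (length_eq_zero_iff.mp h)
    have h1 : t₁.length ≠ 1 := fun h =>
      hchord (c.edges_takeUntil_subset_edges hw (mem_edges_of_length_eq_one h))
    omega
  refine ⟨cons hadj t₂, ?_, by simp only [length_cons]; omega, ?_⟩
  · exact (cons_isCycle_iff t₂ hadj).mpr
      ⟨ht₂, fun h => hchord (c.edges_dropUntil_subset_edges hw h)⟩
  · intro x hx
    rcases List.mem_cons.mp (support_cons hadj t₂ ▸ hx) with rfl | hx
    · exact c.start_mem_support
    · exact c.support_dropUntil_subset_support hw hx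

theorem IsCycle.exists_isInducedCycle_support_subset {v : V} {p : G.Walk v v}
    (hp : p.IsCycle) : ∃ (w : V) (q : G.Walk w w), q.IsInducedCycle ∧ q.support ⊆ p.support := by
  classical
  induction hn : p.length using Nat.strong_induction_on generalizing v p with
  | _ n ih =>
  by_cases hind : ∀ u w, u ∈ p.support → w ∈ p.support → G.Adj u w → s(u, w) ∈ p.edges
  · exact ⟨v, p, ⟨hp, hind⟩, List.Subset.refl _⟩
  push Not at hind
  obtain ⟨u, w, hu, hw, hadj, hchord⟩ := hind
  obtain ⟨q, hq, hlen, hsupp⟩ := (hp.rotate hu).exists_isCycle_length_lt_of_adj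
    ((p.mem_support_rotate_iff u hu).mpr hw) hadj
    (by rwa [(p.rotate_edges u hu).perm.mem_iff])
  obtain ⟨x, r, hr, hrq⟩ := ih q.length (by rw [← hn, ← p.length_rotate u hu]; exact hlen) hq rfl
  exact ⟨x, r, hr, fun y hy => (p.mem_support_rotate_iff u hu).mp (hsupp (hrq hy))⟩

/-- A vertex of an induced cycle has no neighbours on the cycle besides its two cycle
neighbours. -/
theorem IsInducedCycle.length_le_three_of_forall_adj {v w : V} {p : G.Walk v v}
    (hp : p.IsInducedCycle) (hw : w ∈ p.support) (hdom : ∀ x ∈ p.support, x ≠ w → G.Adj w x) :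
    p.length ≤ 3 := by
  classical
  set N := p.toSubgraph.neighborSet w
  have hN : N.ncard = 2 := hp.1.ncard_neighborSet_toSubgraph_eq_two hw
  have hsub : {x | x ∈ p.support.tail} ⊆ insert w N := by
    intro x hx
    have hx' : x ∈ p.support := List.mem_of_mem_tail hx
    by_cases hxw : x = w
    · exact Or.inl hxw
    · exact Or.inr (Subgraph.mem_edgeSet.mp
        (p.mem_edges_toSubgraph.mpr (hp.2 w x hw hx' (hdom x hx' hxw))))
  have hfin : (insert w N).Finite := (Set.finite_of_ncard_ne_zero (by omega)).insert w
  calc p.length = p.support.tail.toFinset.card := by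
        rw [List.toFinset_card_of_nodup hp.1.support_nodup, List.length_tail, length_support]
        rfl
    _ = {x | x ∈ p.support.tail}.ncard := by
        rw [← Set.ncard_coe_finset]; simp
    _ ≤ (insert w N).ncard := Set.ncard_le_ncard hsub hfin
    _ ≤ N.ncard + 1 := Set.ncard_insert_le w N
    _ = 3 := by rw [hN]

theorem forall_mem_edges_left_of_le_sup {H₁ H₂ : SimpleGraph V} (hG : G ≤ H₁ ⊔ H₂)
    (hd : Disjoint H₁.support H₂.support) {u v : V} (p : G.Walk u v) (hu : u ∉ H₂.support) :
    ∀ e ∈ p.edges, e ∈ H₁.edgeSet := by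
  induction p with
  | nil => simp
  | cons h q ih =>
    have h₁ := (hG h).resolve_right fun h₂ => hu h₂.left_mem_support
    intro e he
    rcases List.mem_cons.mp (edges_cons h q ▸ he) with rfl | he
    · exact h₁
    · exact ih (Set.disjoint_left.mp hd h₁.right_mem_support) e he

end SimpleGraph.Walk

section Chordal

variable {V : Type*}

open SimpleGraph.Walk

theorem isChordal_bot : IsChordal (⊥ : SimpleGraph V) := by
  intro v p hp
  cases p with
  | nil => exact absurd hp.1 not_isCycle_nil
  | cons h _ => exact absurd h (by simp)

theorem IsChordal.length_le_three_of_edges_subset {H K : SimpleGraph V} (hK : IsChordal K)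
    (hKH : K ≤ H) {v : V} {p : H.Walk v v} (hp : p.IsInducedCycle)
    (he : ∀ e ∈ p.edges, e ∈ K.edgeSet) : p.length ≤ 3 := by
  have hq : (p.transfer K he).IsInducedCycle := by
    refine ⟨hp.1.transfer he, fun u w hu hw hadj => ?_⟩
    rw [support_transfer] at hu hw
    rw [edges_transfer]
    exact hp.2 u w hu hw (hKH hadj)
  simpa using hK v _ hq

theorem IsChordal.sup_of_disjoint {H₁ H₂ : SimpleGraph V} (h₁ : IsChordal H₁)
    (h₂ : IsChordal H₂) (hd : Disjoint H₁.support H₂.support) : IsChordal (H₁ ⊔ H₂) := by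
  intro v p hp
  by_cases hv : v ∈ H₂.support
  · exact h₂.length_le_three_of_edges_subset le_sup_right hp
      (p.forall_mem_edges_left_of_le_sup (sup_comm _ _).le hd.symm (Set.disjoint_right.mp hd hv))
  · exact h₁.length_le_three_of_edges_subset le_sup_left hp
      (p.forall_mem_edges_left_of_le_sup le_rfl hd hv)

/-- Joining every vertex of `B ⊆ s` to all of `s` keeps a graph on `s` chordal: an induced cycle
through `B` has a vertex adjacent to all the others, and one avoiding `B` uses only old edges. -/
theorem IsChordal.sup_fromRel {H : SimpleGraph V} (hH : IsChordal H) {B s : Set V}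
    (hHs : H.support ⊆ s) (hBs : B ⊆ s) :
    IsChordal (H ⊔ fromRel fun u w => u ∈ B ∧ w ∈ s) := by
  have hs : (H ⊔ fromRel fun u w => u ∈ B ∧ w ∈ s).support ⊆ s := by
    rintro x ⟨y, hxy | hxy⟩
    · exact hHs hxy.left_mem_support
    · rcases ((fromRel_adj _ _ _).mp hxy).2 with ⟨hx, -⟩ | ⟨-, hx⟩
      exacts [hBs hx, hx]
  intro v p hp
  by_cases hB : ∃ w ∈ p.support, w ∈ B
  · obtain ⟨w, hw, hwB⟩ := hB
    refine hp.length_le_three_of_forall_adj hw fun x hx hxw => Or.inr ?_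
    exact (fromRel_adj _ _ _).mpr
      ⟨hxw.symm, Or.inl ⟨hwB, hs (mem_support_of_mem_walk_support p hp.1.not_nil hx)⟩⟩
  · push Not at hB
    refine hH.length_le_three_of_edges_subset le_sup_left hp fun e he => ?_
    induction e using Sym2.ind with
    | _ x y =>
    rcases p.adj_of_mem_edges he with h | h
    · exact h
    · rcases ((fromRel_adj _ _ _).mp h).2 with ⟨hx, -⟩ | ⟨hy, -⟩
      · exact absurd hx (hB x (p.fst_mem_support_of_mem_edges he))
      · exact absurd hy (hB y (p.snd_mem_support_of_mem_edges he))

end Chordal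

section Coloring

variable {V α : Type*} {G : SimpleGraph V} {φ : V → α}

open SimpleGraph.Walk

theorem isAcyclic_induce_iff {s : Set V} :
    (G.induce s).IsAcyclic ↔ ∀ (v : V) (p : G.Walk v v), p.IsCycle → ¬ ∀ x ∈ p.support, x ∈ s := by
  constructor
  · intro h v p hp hs
    exact h (p.induce s hs) (IsCycle.of_map (f := (Embedding.induce s).toHom) (by rwa [map_induce]))
  · intro h v q hq
    refine h _ (q.map (Embedding.induce s).toHom)
      ((isCycle_map_iff_of_injective (Embedding.induce (G := G) s).injective).mpr hq) ?_
    simp only [Walk.support_map, List.mem_map]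
    rintro x ⟨a, -, rfl⟩
    exact a.2

theorem IsProperColoring.even_length_iff {H : SimpleGraph V} (hφ : IsProperColoring H φ)
    {c₁ c₂ : α} {u v : V} (p : H.Walk u v) (hp : ∀ x ∈ p.support, φ x = c₁ ∨ φ x = c₂) :
    Even p.length ↔ φ u = φ v := by
  induction p with
  | nil => simp
  | cons h q ih =>
    simp only [support_cons, List.mem_cons, forall_eq_or_imp] at hp
    rw [length_cons, Nat.even_add_one, ih hp.2]
    have := hφ h
    have := hp.2 _ q.start_mem_support
    have := hp.2 _ q.end_mem_support
    grind

theorem IsChordal.isAcyclicColoring_of_le {H : SimpleGraph V} (hH : IsChordal H) (hGH : G ≤ H)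
    (hφ : IsProperColoring H φ) : IsAcyclicColoring G φ := by
  refine ⟨fun u v h => hφ (hGH h), fun c₁ c₂ => isAcyclic_induce_iff.mpr fun v p hp hpc => ?_⟩
  obtain ⟨w, q, hq, hqp⟩ := ((isCycle_mapLe hGH).mpr hp).exists_isInducedCycle_support_subset
  have hq₂ : ∀ x ∈ q.support, φ x = c₁ ∨ φ x = c₂ :=
    fun x hx => hpc x (by simpa [support_mapLe_eq_support] using hqp hx)
  have h3 : q.length = 3 := le_antisymm (hH w q hq) hq.1.three_le_length
  have heven := (hφ.even_length_iff q hq₂).mpr rfl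
  rw [h3] at heven
  exact absurd heven (by decide)

theorem IsAcyclicColoring.injOn_or_injOn (hφ : IsAcyclicColoring G φ) {A B : Set V}
    (hAB : ∀ a ∈ A, ∀ b ∈ B, G.Adj a b) : Set.InjOn φ A ∨ Set.InjOn φ B := by
  by_contra! h
  simp only [Set.InjOn] at h
  push Not at h
  obtain ⟨⟨x, hx, x', hx', hφx, hxx'⟩, ⟨y, hy, y', hy', hφy, hyy'⟩⟩ := h
  have h₁ := hAB x hx y hy
  have h₂ := hAB x' hx' y hy
  have h₃ := hAB x' hx' y' hy'
  have h₄ := hAB x hx y' hy'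
  let c : G.Walk x x := cons h₁ (cons h₂.symm (cons h₃ (cons h₄.symm nil)))
  have hc : c.IsCycle := by
    simp [c, cons_isCycle_iff, h₁.ne, h₃.ne, h₄.ne, h₁.ne.symm, h₂.ne.symm, h₄.ne.symm,
      hxx', hyy', hxx'.symm]
  refine isAcyclic_induce_iff.mp (hφ.2 (φ x) (φ y)) x c hc ?_
  simp [c, hφx, hφy]

end Coloring

section Cograph

variable {V : Type*} {G : SimpleGraph V}

theorem IsCograph.compl (hG : IsCograph G) : IsCograph Gᶜ := by
  rintro ⟨a, b, c, d, hab, hac, had, hbc, hbd, hcd, e₁, e₂, e₃, n₁, n₂, n₃⟩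
  rw [compl_adj] at e₁ e₂ e₃
  -- the induced path `a - b - c - d` of `Gᶜ` is the induced path `b - d - a - c` of `G`
  have g₁ : G.Adj a c := by_contra fun h => n₁ ⟨hac, h⟩
  have g₂ : G.Adj a d := by_contra fun h => n₂ ⟨had, h⟩
  have g₃ : G.Adj b d := by_contra fun h => n₃ ⟨hbd, h⟩
  exact hG ⟨b, d, a, c, hbd, hab.symm, hbc, had.symm, hcd.symm, hac,
    g₃, g₂.symm, g₁, fun h => e₁.2 h.symm, e₂.2, fun h => e₃.2 h.symm⟩

variable [DecidableEq V]

def SimpleGraph.IsDisconnectedOn (G : SimpleGraph V) (s : Finset V) : Prop :=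
  ∃ S ⊂ s, S.Nonempty ∧ ∀ u ∈ S, ∀ w ∈ s \ S, ¬ G.Adj u w

theorem SimpleGraph.isDisconnectedOn_of_forall_not_adj {s : Finset V} {v : V} (hv : v ∈ s)
    (hs : 1 < s.card) (h : ∀ w ∈ s, ¬ G.Adj v w) : G.IsDisconnectedOn s := by
  refine ⟨{v}, Finset.ssubset_iff_subset_ne.mpr ⟨Finset.singleton_subset_iff.mpr hv, ?_⟩,
    Finset.singleton_nonempty v, fun u hu w hw => ?_⟩
  · rintro rfl
    simp at hs
  · rw [Finset.mem_singleton.mp hu]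
    exact h w (Finset.mem_sdiff.mp hw).1

theorem SimpleGraph.exists_adj_of_not_isDisconnectedOn_insert {T S : Finset V} {v : V}
    (hcon : ¬ G.IsDisconnectedOn (insert v T)) (hv : v ∉ T) (hST : S ⊂ T) (hS : S.Nonempty)
    (hsep : ∀ u ∈ S, ∀ w ∈ T \ S, ¬ G.Adj u w) : ∃ p ∈ S, G.Adj v p := by
  by_contra! hno
  refine hcon ⟨S, hST.trans (Finset.ssubset_insert hv), hS, fun u hu w hw => ?_⟩
  rw [Finset.insert_sdiff_of_notMem _ fun h => hv (hST.subset h), Finset.mem_insert] at hw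
  rcases hw with rfl | hw
  · exact fun h => hno u hu h.symm
  · exact hsep u hu w hw

/-- Were `G[T + v]` connected, take a minimal part `S ∋ y` of `T` with no edge to `T \ S`. Then `v`
has a neighbour `z ∉ S` and, by minimality, there is an edge `q w` inside `S` with `q ≁ v ∼ w`;
so `q - w - v - z` is an induced `P₄`. -/
theorem IsCograph.isDisconnectedOn_insert (hG : IsCograph G) {T : Finset V} {v y : V}
    (hv : v ∉ T) (hy : y ∈ T) (hvy : ¬ G.Adj v y) (hT : G.IsDisconnectedOn T) :
    G.IsDisconnectedOn (insert v T) := by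
  classical
  by_contra hcon
  have hswap : ∀ S ⊆ T, (∀ u ∈ S, ∀ w ∈ T \ S, ¬ G.Adj u w) →
      ∀ u ∈ T \ S, ∀ w ∈ T \ (T \ S), ¬ G.Adj u w := by
    intro S hST hsep u hu w hw huw
    rw [Finset.sdiff_sdiff_eq_self hST] at hw
    exact hsep w hw u hu huw.symm
  have hmin : ∀ S ⊂ T, y ∈ S → (∀ u ∈ S, ∀ w ∈ T \ S, ¬ G.Adj u w) → False := by
    intro S
    induction S using Finset.strongInduction with
    | H S ih =>
    intro hST hyS hsep
    have hTS : T \ S ⊂ T := Finset.sdiff_ssubset hST.subset ⟨y, hyS⟩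
    obtain ⟨p, hpS, hvp⟩ := exists_adj_of_not_isDisconnectedOn_insert hcon hv hST ⟨y, hyS⟩ hsep
    obtain ⟨z, hz, hvz⟩ := exists_adj_of_not_isDisconnectedOn_insert hcon hv hTS
      (Finset.sdiff_nonempty.mpr hST.not_subset)
      (hswap S hST.subset hsep)
    set M := S.filter fun x => ¬ G.Adj v x
    have hMS : M ⊂ S := Finset.filter_ssubset.mpr ⟨p, hpS, not_not.mpr hvp⟩
    by_cases hM : ∀ u ∈ M, ∀ w ∈ T \ M, ¬ G.Adj u w
    · exact ih M hMS (hMS.trans hST) (Finset.mem_filter.mpr ⟨hyS, hvy⟩) hM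
    push Not at hM
    obtain ⟨q, hqM, w, hwM, hqw⟩ := hM
    obtain ⟨hqS, hvq⟩ := Finset.mem_filter.mp hqM
    have hzS : z ∉ S := (Finset.mem_sdiff.mp hz).2
    have hwS : w ∈ S := by
      by_contra hwS
      exact hsep q hqS w (Finset.mem_sdiff.mpr ⟨(Finset.mem_sdiff.mp hwM).1, hwS⟩) hqw
    have hvw : G.Adj v w := by
      by_contra h
      exact (Finset.mem_sdiff.mp hwM).2 (Finset.mem_filter.mpr ⟨hwS, h⟩)
    exact hG ⟨q, w, v, z, hqw.ne, fun h => hv (h ▸ hST.subset hqS), fun h => hzS (h ▸ hqS),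
      hvw.ne', fun h => hzS (h ▸ hwS), hvz.ne, hqw, hvw.symm, hvz,
      fun h => hvq h.symm, hsep q hqS z hz, hsep w hwS z hz⟩
  obtain ⟨S, hST, hS, hsep⟩ := hT
  by_cases hyS : y ∈ S
  · exact hmin S hST hyS hsep
  · exact hmin (T \ S) (Finset.sdiff_ssubset hST.subset hS) (Finset.mem_sdiff.mpr ⟨hy, hyS⟩)
      (hswap S hST.subset hsep)

/-- Seinsche's theorem. -/
theorem IsCograph.isDisconnectedOn_or_compl (hG : IsCograph G) (s : Finset V)
    (hs : 1 < s.card) : G.IsDisconnectedOn s ∨ Gᶜ.IsDisconnectedOn s := by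
  induction s using Finset.strongInduction with
  | H s ih =>
  obtain ⟨v, hv⟩ := Finset.card_pos.mp (by omega : 0 < s.card)
  set T := s.erase v
  have hvT : v ∉ T := Finset.notMem_erase v s
  have hTs : insert v T = s := Finset.insert_erase hv
  by_cases hall : ∀ t ∈ T, G.Adj v t
  · refine Or.inr (isDisconnectedOn_of_forall_not_adj hv hs fun w hw h => ?_)
    obtain ⟨hvw, hnadj⟩ := (compl_adj G v w).mp h
    exact hnadj (hall w (Finset.mem_erase.mpr ⟨hvw.symm, hw⟩))
  by_cases hnone : ∀ t ∈ T, ¬ G.Adj v t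
  · refine Or.inl (isDisconnectedOn_of_forall_not_adj hv hs fun w hw h => ?_)
    exact hnone w (Finset.mem_erase.mpr ⟨h.ne', hw⟩) h
  push Not at hall hnone
  obtain ⟨y, hy, hvy⟩ := hall
  obtain ⟨x, hx, hvx⟩ := hnone
  have hT : 1 < T.card := Finset.one_lt_card.mpr ⟨x, hx, y, hy, fun h => hvy (h ▸ hvx)⟩
  rw [← hTs]
  rcases ih T (Finset.erase_ssubset hv) hT with hT | hT
  · exact Or.inl (hG.isDisconnectedOn_insert hvT hy hvy hT)
  · exact Or.inr (hG.compl.isDisconnectedOn_insert hvT hx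
      (fun h => ((compl_adj G v x).mp h).2 hvx) hT)

end Cograph

section Triangulation

variable {V α : Type*} {G : SimpleGraph V} {φ : V → α}

def HasProperTriangulationOn (G : SimpleGraph V) (φ : V → α) (s : Finset V) : Prop :=
  ∃ H : SimpleGraph V, (∀ u ∈ s, ∀ w ∈ s, G.Adj u w → H.Adj u w) ∧ IsChordal H ∧
    IsProperColoring H φ ∧ H.support ⊆ s

theorem hasProperTriangulationOn_of_card_le_one {s : Finset V} (hs : s.card ≤ 1) :
    HasProperTriangulationOn G φ s := by
  refine ⟨⊥, fun u hu w hw h => ?_, isChordal_bot, fun u w h => h.elim, ?_⟩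
  · exact absurd (Finset.card_le_one.mp hs u hu w hw) h.ne
  · rintro x ⟨y, h⟩
    exact h.elim

theorem HasProperTriangulationOn.union {A B : Finset V} [DecidableEq V]
    (hA : HasProperTriangulationOn G φ A) (hB : HasProperTriangulationOn G φ B)
    (hAB : Disjoint A B) (hsep : ∀ a ∈ A, ∀ b ∈ B, ¬ G.Adj a b) :
    HasProperTriangulationOn G φ (A ∪ B) := by
  obtain ⟨H₁, hGH₁, hH₁, hφ₁, hs₁⟩ := hA
  obtain ⟨H₂, hGH₂, hH₂, hφ₂, hs₂⟩ := hB
  refine ⟨H₁ ⊔ H₂, fun u hu w hw h => ?_,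
    hH₁.sup_of_disjoint hH₂ ((Finset.disjoint_coe.mpr hAB).mono hs₁ hs₂),
    fun u w h => h.elim (fun h => hφ₁ h) (fun h => hφ₂ h), ?_⟩
  · rw [Finset.mem_union] at hu hw
    rcases hu with hu | hu <;> rcases hw with hw | hw
    · exact Or.inl (hGH₁ u hu w hw h)
    · exact absurd h (hsep u hu w hw)
    · exact absurd h.symm (hsep w hw u hu)
    · exact Or.inr (hGH₂ u hu w hw h)
  · rintro x ⟨y, h | h⟩
    · exact Finset.mem_union_left B (hs₁ h.left_mem_support)
    · exact Finset.mem_union_right A (hs₂ h.left_mem_support)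

theorem HasProperTriangulationOn.join {A B : Finset V} [DecidableEq V]
    (hA : HasProperTriangulationOn G φ A) (hφ : IsProperColoring G φ)
    (hcross : ∀ a ∈ A, ∀ b ∈ B, G.Adj a b) (hinj : Set.InjOn φ B) :
    HasProperTriangulationOn G φ (A ∪ B) := by
  obtain ⟨H₁, hGH₁, hH₁, hφ₁, hs₁⟩ := hA
  have hAs : (A : Set V) ⊆ ↑(A ∪ B) := Finset.coe_subset.mpr Finset.subset_union_left
  have hBs : (B : Set V) ⊆ ↑(A ∪ B) := Finset.coe_subset.mpr Finset.subset_union_right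
  refine ⟨H₁ ⊔ fromRel fun u w => u ∈ (B : Set V) ∧ w ∈ (↑(A ∪ B) : Set V),
    fun u hu w hw h => ?_, hH₁.sup_fromRel (hs₁.trans hAs) hBs, ?_, ?_⟩
  · by_cases huB : u ∈ B
    · exact Or.inr ((fromRel_adj _ _ _).mpr ⟨h.ne, Or.inl ⟨huB, hw⟩⟩)
    by_cases hwB : w ∈ B
    · exact Or.inr ((fromRel_adj _ _ _).mpr ⟨h.ne, Or.inr ⟨hwB, hu⟩⟩)
    rw [Finset.mem_union] at hu hw
    exact Or.inl (hGH₁ u (hu.resolve_right huB) w (hw.resolve_right hwB) h)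
  · have hB : ∀ u w, u ∈ B → w ∈ A ∪ B → u ≠ w → φ u ≠ φ w := by
      intro u w hu hw huw
      rcases Finset.mem_union.mp hw with hw | hw
      · exact (hφ (hcross w hw u hu)).symm
      · exact fun h => huw (hinj hu hw h)
    rintro u w (h | h)
    · exact hφ₁ h
    · rcases ((fromRel_adj _ _ _).mp h).2 with ⟨hu, hw⟩ | ⟨hw, hu⟩
      · exact hB u w hu hw h.ne
      · exact (hB w u hw hu h.ne.symm).symm
  · rintro x ⟨y, h | h⟩
    · exact hAs (hs₁ h.left_mem_support)
    · rcases ((fromRel_adj _ _ _).mp h).2 with ⟨hx, -⟩ | ⟨-, hx⟩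
      exacts [hBs hx, hx]

theorem IsCograph.hasProperTriangulationOn [DecidableEq V] (hG : IsCograph G)
    (hφ : IsAcyclicColoring G φ) (s : Finset V) : HasProperTriangulationOn G φ s := by
  induction s using Finset.strongInduction with
  | H s ih =>
  by_cases hs : s.card ≤ 1
  · exact hasProperTriangulationOn_of_card_le_one hs
  have hsplit := hG.isDisconnectedOn_or_compl s (by omega)
  obtain ⟨S, hSs, hS, hsep⟩ : ∃ S ⊂ s, S.Nonempty ∧
      ((∀ u ∈ S, ∀ w ∈ s \ S, ¬ G.Adj u w) ∨ ∀ u ∈ S, ∀ w ∈ s \ S, G.Adj u w) := by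
    rcases hsplit with ⟨S, hSs, hS, hsep⟩ | ⟨S, hSs, hS, hsep⟩
    · exact ⟨S, hSs, hS, Or.inl hsep⟩
    · refine ⟨S, hSs, hS, Or.inr fun u hu w hw => ?_⟩
      have huw : u ≠ w := fun h => (Finset.mem_sdiff.mp hw).2 (h ▸ hu)
      simpa [compl_adj, huw] using hsep u hu w hw
  have hrest : s \ S ⊂ s := Finset.sdiff_ssubset hSs.subset hS
  rcases hsep with hsep | hcross
  · rw [← Finset.union_sdiff_of_subset hSs.subset]
    exact (ih S hSs).union (ih _ hrest) Finset.disjoint_sdiff hsep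
  · rcases hφ.injOn_or_injOn (A := (S : Set V)) (B := ↑(s \ S)) hcross with hinj | hinj
    · rw [← Finset.sdiff_union_of_subset hSs.subset]
      exact (ih _ hrest).join hφ.1 (fun a ha b hb => (hcross b hb a ha).symm) hinj
    · rw [← Finset.union_sdiff_of_subset hSs.subset]
      exact (ih S hSs).join hφ.1 hcross hinj

end Triangulation

theorem isAcyclicColoring_iff_proper_coloring_of_triangulation_general {V : Type*} [Fintype V]
    (G : SimpleGraph V) (hG : IsCograph G) (φ : V → ℕ) :
    IsAcyclicColoring G φ ↔
      ∃ H : SimpleGraph V, G ≤ H ∧ IsChordal H ∧ IsProperColoring H φ := by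
  classical
  refine ⟨fun hφ => ?_, fun ⟨H, hGH, hH, hφH⟩ => hH.isAcyclicColoring_of_le hGH hφH⟩
  obtain ⟨H, hGH, hH, hφH, -⟩ := hG.hasProperTriangulationOn hφ Finset.univ
  exact ⟨H, fun u w h => hGH u (Finset.mem_univ u) w (Finset.mem_univ w) h, hH, hφH⟩

/-- For a cograph `G`, a proper coloring `φ` is acyclic iff `φ` is a
proper coloring of some triangulation of `G`. -/
theorem isAcyclicColoring_iff_proper_coloring_of_triangulation {V : Type*} [Fintype V]
    (G : SimpleGraph V) (hG : IsCograph G) (φ : V → ℕ) (hφ : IsProperColoring G φ) :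
    IsAcyclicColoring G φ ↔
      ∃ H : SimpleGraph V, G ≤ H ∧ IsChordal H ∧ IsProperColoring H φ :=
  isAcyclicColoring_iff_proper_coloring_of_triangulation_general G hG φ
end
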